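/- arXiv:2103.00958 — 5 statements merged into one kernel-verified Lean document; each statement's English description precedes it below -/
import Mathlib

section
/- Let G ≥ 0, L ≥ 0, γ ≥ 0 be reals and τ ≥ 1 a natural number, and set k := 2L²γ²τ². Assume k < 1. Let a : ℕ → ℝ be a nonnegative sequence such that a(0) ≤ G and, for every t ≥ 1, there exists a finite set D(t) ⊆ {0, 1, …, t−1} with |D(t)| ≤ τ such that a(t) ≤ 2G + 2L²γ²τ · ∑_{t' ∈ D(t)} a(t'). Then for every t one has a(t) ≤ 2G·(1 − k^{t+1})/(1 − k), and in particular a(t) ≤ 2G/(1 − k). -/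
theorem stmt_3 (G L γ : ℝ) (hG : 0 ≤ G) (hL : 0 ≤ L) (hγ : 0 ≤ γ)
    (τ : ℕ) (hτ : 1 ≤ τ) (k : ℝ) (hk : k = 2 * L ^ 2 * γ ^ 2 * (τ : ℝ) ^ 2) (hk1 : k < 1)
    (a : ℕ → ℝ) (ha : ∀ t, 0 ≤ a t) (h0 : a 0 ≤ G)
    (hrec : ∀ t, 1 ≤ t → ∃ D : Finset ℕ,
      (∀ t' ∈ D, t' < t) ∧ D.card ≤ τ ∧
      a t ≤ 2 * G + 2 * L ^ 2 * γ ^ 2 * (τ : ℝ) * ∑ t' ∈ D, a t') :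
    ∀ t, a t ≤ 2 * G * (1 - k ^ (t + 1)) / (1 - k) ∧ a t ≤ 2 * G / (1 - k) := by
  have hk0 : 0 ≤ k := by rw [hk]; positivity
  have h1k : 0 < 1 - k := by linarith
  have key : ∀ t, a t ≤ 2 * G * (1 - k ^ (t + 1)) / (1 - k) := by
    intro t
    induction t using Nat.strong_induction_on with
    | _ t ih =>
      rcases Nat.eq_zero_or_pos t with rfl | ht
      · have : 2 * G * (1 - k ^ (0 + 1)) / (1 - k) = 2 * G := by
          rw [zero_add, pow_one, mul_div_assoc, div_self h1k.ne', mul_one]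
        rw [this]; linarith
      · obtain ⟨D, hD, hcard, hbound⟩ := hrec t ht
        set B : ℝ := 2 * G * (1 - k ^ t) / (1 - k) with hB
        have hBnn : 0 ≤ B := by
          apply div_nonneg _ h1k.le
          have : k ^ t ≤ 1 := pow_le_one₀ hk0 hk1.le
          nlinarith
        have hsum : ∑ t' ∈ D, a t' ≤ (τ : ℝ) * B := by
          calc ∑ t' ∈ D, a t' ≤ ∑ _t' ∈ D, B := by
                apply Finset.sum_le_sum
                intro i hi
                have h1 := ih i (hD i hi)
                have hexp : k ^ t ≤ k ^ (i + 1) :=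
                  pow_le_pow_of_le_one hk0 hk1.le (Nat.succ_le_of_lt (hD i hi))
                calc a i ≤ 2 * G * (1 - k ^ (i + 1)) / (1 - k) := h1
                  _ ≤ B := by
                    rw [hB]
                    gcongr
            _ = (D.card : ℝ) * B := by rw [Finset.sum_const, nsmul_eq_mul]
            _ ≤ (τ : ℝ) * B := by
                apply mul_le_mul_of_nonneg_right _ hBnn
                exact_mod_cast hcard
        have hc : 0 ≤ 2 * L ^ 2 * γ ^ 2 * (τ : ℝ) := by positivity
        have step : a t ≤ 2 * G + k * B := by
          calc a t ≤ 2 * G + 2 * L ^ 2 * γ ^ 2 * (τ : ℝ) * ∑ t' ∈ D, a t' := hbound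
            _ ≤ 2 * G + 2 * L ^ 2 * γ ^ 2 * (τ : ℝ) * ((τ : ℝ) * B) := by
                have := mul_le_mul_of_nonneg_left hsum hc
                linarith
            _ = 2 * G + k * B := by rw [hk]; ring
        have heq : 2 * G + k * B = 2 * G * (1 - k ^ (t + 1)) / (1 - k) := by
          rw [hB]
          field_simp
          ring
        linarith [step, heq.le]
  intro t
  refine ⟨key t, (key t).trans ?_⟩
  have h1 : 0 ≤ k ^ (t + 1) := pow_nonneg hk0 _
  have h2 : 2 * G * (1 - k ^ (t + 1)) ≤ 2 * G := by nlinarith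
  exact (div_le_div_iff_of_pos_right h1k).mpr h2
end

section
/- Let L ≥ 0, γ ≥ 0 be reals, τ ≥ 1 and S natural numbers, and assume 6L²γ²τ² < 1. Let a, b : ℕ → ℝ be nonnegative sequences such that for every t < S there is a finite set D(t) ⊆ { t' : t − τ ≤ t' < t } with a(t) ≤ 4·b(t) + 6L²γ²τ · ∑_{t' ∈ D(t)} a(t'). Then ∑_{t=0}^{S−1} a(t) ≤ (4/(1 − 6L²γ²τ²)) · ∑_{t=0}^{S−1} b(t). -/
theorem stmt_5 (L γ : ℝ) (hL : 0 ≤ L) (hγ : 0 ≤ γ) (τ S : ℕ) (hτ : 1 ≤ τ)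
    (hsmall : 6 * L ^ 2 * γ ^ 2 * (τ : ℝ) ^ 2 < 1)
    (a b : ℕ → ℝ) (ha : ∀ t, 0 ≤ a t) (hb : ∀ t, 0 ≤ b t)
    (hrec : ∀ t < S, ∃ D : Finset ℕ,
      (∀ t' ∈ D, t' < t ∧ t - τ ≤ t') ∧
      a t ≤ 4 * b t + 6 * L ^ 2 * γ ^ 2 * (τ : ℝ) * ∑ t' ∈ D, a t') :
    ∑ t ∈ Finset.range S, a t ≤
      4 / (1 - 6 * L ^ 2 * γ ^ 2 * (τ : ℝ) ^ 2) * ∑ t ∈ Finset.range S, b t := by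
  set c : ℝ := 6 * L ^ 2 * γ ^ 2 with hc
  have hc0 : 0 ≤ c := by positivity
  have hτ0 : (0:ℝ) ≤ (τ:ℝ) := Nat.cast_nonneg τ
  -- bound each a t by sum over Ico
  have key : ∀ t ∈ Finset.range S,
      a t ≤ 4 * b t + c * (τ:ℝ) * ∑ t' ∈ Finset.Ico (t - τ) t, a t' := by
    intro t ht
    rw [Finset.mem_range] at ht
    obtain ⟨D, hD, hineq⟩ := hrec t ht
    refine hineq.trans ?_
    have hsub : D ⊆ Finset.Ico (t - τ) t := by
      intro x hx
      rw [Finset.mem_Ico]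
      exact ⟨(hD x hx).2, (hD x hx).1⟩
    have : ∑ t' ∈ D, a t' ≤ ∑ t' ∈ Finset.Ico (t - τ) t, a t' :=
      Finset.sum_le_sum_of_subset_of_nonneg hsub (fun i _ _ => ha i)
    nlinarith [mul_nonneg hc0 hτ0]
  -- double counting
  have swap : ∑ t ∈ Finset.range S, ∑ t' ∈ Finset.Ico (t - τ) t, a t' ≤
      (τ:ℝ) * ∑ t ∈ Finset.range S, a t := by
    calc ∑ t ∈ Finset.range S, ∑ t' ∈ Finset.Ico (t - τ) t, a t'
        = ∑ t ∈ Finset.range S, ∑ t' ∈ Finset.range S,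
            if t' ∈ Finset.Ico (t - τ) t then a t' else 0 := by
          refine Finset.sum_congr rfl fun t ht => ?_
          rw [Finset.mem_range] at ht
          rw [Finset.sum_ite_mem]
          symm
          congr 1
          apply Finset.inter_eq_right.mpr
          intro x hx
          rw [Finset.mem_Ico] at hx
          exact Finset.mem_range.mpr (lt_trans hx.2 ht)
      _ = ∑ t' ∈ Finset.range S, ∑ t ∈ Finset.range S,
            if t' ∈ Finset.Ico (t - τ) t then a t' else 0 := Finset.sum_comm
      _ ≤ ∑ t' ∈ Finset.range S, (τ:ℝ) * a t' := by
          refine Finset.sum_le_sum fun t' _ => ?_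
          rw [Finset.sum_ite, Finset.sum_const_zero, add_zero, Finset.sum_const,
            nsmul_eq_mul]
          refine mul_le_mul_of_nonneg_right ?_ (ha t')
          have hcard : ((Finset.range S).filter (fun t => t' ∈ Finset.Ico (t - τ) t)).card
              ≤ τ := by
            have hsub : ((Finset.range S).filter (fun t => t' ∈ Finset.Ico (t - τ) t))
                ⊆ Finset.Ioc t' (t' + τ) := by
              intro t ht
              rw [Finset.mem_filter, Finset.mem_Ico] at ht
              rw [Finset.mem_Ioc]
              exact ⟨ht.2.2, Nat.sub_le_iff_le_add.mp ht.2.1⟩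
            calc _ ≤ (Finset.Ioc t' (t' + τ)).card := Finset.card_le_card hsub
              _ = τ := by rw [Nat.card_Ioc]; omega
          exact_mod_cast Nat.cast_le.mpr hcard
      _ = (τ:ℝ) * ∑ t ∈ Finset.range S, a t := by rw [Finset.mul_sum]
  have main : ∑ t ∈ Finset.range S, a t ≤
      4 * ∑ t ∈ Finset.range S, b t + c * (τ:ℝ) ^ 2 * ∑ t ∈ Finset.range S, a t := by
    calc ∑ t ∈ Finset.range S, a t
        ≤ ∑ t ∈ Finset.range S,
            (4 * b t + c * (τ:ℝ) * ∑ t' ∈ Finset.Ico (t - τ) t, a t') :=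
          Finset.sum_le_sum key
      _ = 4 * ∑ t ∈ Finset.range S, b t +
            c * (τ:ℝ) * ∑ t ∈ Finset.range S, ∑ t' ∈ Finset.Ico (t - τ) t, a t' := by
          rw [Finset.sum_add_distrib, ← Finset.mul_sum, ← Finset.mul_sum]
      _ ≤ 4 * ∑ t ∈ Finset.range S, b t +
            c * (τ:ℝ) * ((τ:ℝ) * ∑ t ∈ Finset.range S, a t) := by
          gcongr
      _ = 4 * ∑ t ∈ Finset.range S, b t +
            c * (τ:ℝ) ^ 2 * ∑ t ∈ Finset.range S, a t := by ring
  have hpos : 0 < 1 - c * (τ:ℝ) ^ 2 := by linarith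
  rw [div_mul_eq_mul_div, le_div_iff₀ hpos]
  nlinarith [main]
end

section
/- Let n ≥ 1 and let f_i : ℝ^d → ℝ (i = 1, …, n) be differentiable functions each with L-Lipschitz gradient, and set f := (1/n)·∑_{i=1}^n f_i. Then for all w, w̃ ∈ ℝ^d, (1/n)·∑_{i=1}^n ‖∇f_i(w) − ∇f_i(w̃) + ∇f(w̃)‖² ≤ 2‖∇f(w)‖² + 2L²‖w − w̃‖². -/
/-!
With `aᵢ = ∇fᵢ(w) - ∇fᵢ(w̃)`, whose mean is `∇f(w) - ∇f(w̃)`, the SVRG gradient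
`aᵢ + ∇f(w̃)` equals `(aᵢ - mean a) + ∇f(w)`. Then `‖x + y‖² ≤ 2‖x‖² + 2‖y‖²`, and the variance
of the `aᵢ` is at most their second moment, which the Lipschitz bound controls by `L²‖w - w̃‖²`.
-/

open Finset

theorem gradient_fun_const_mul_sum {F ι : Type*} [NormedAddCommGroup F] [InnerProductSpace ℝ F]
    [CompleteSpace F] (s : Finset ι) {f : ι → F → ℝ} {x : F} (c : ℝ)
    (hf : ∀ i ∈ s, DifferentiableAt ℝ (f i) x) :
    gradient (fun w => c * ∑ i ∈ s, f i w) x = c • ∑ i ∈ s, gradient (f i) x := by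
  have hfderiv : fderiv ℝ (fun w => c • ∑ i ∈ s, f i w) x = c • ∑ i ∈ s, fderiv ℝ (f i) x := by
    rw [fderiv_fun_const_smul (DifferentiableAt.fun_sum hf), fderiv_fun_sum hf]
  simp only [gradient, smul_eq_mul] at hfderiv ⊢
  rw [hfderiv, map_smul, map_sum]

theorem norm_add_sq_le {E : Type*} [SeminormedAddCommGroup E] (x y : E) :
    ‖x + y‖ ^ 2 ≤ 2 * (‖x‖ ^ 2 + ‖y‖ ^ 2) :=
  (pow_le_pow_left₀ (norm_nonneg _) (norm_add_le x y) 2).trans add_sq_le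

section Variance

variable {ι E : Type*} [NormedAddCommGroup E] [InnerProductSpace ℝ E]

theorem sum_norm_sub_average_sq (s : Finset ι) (a : ι → E) :
    ∑ i ∈ s, ‖a i - (#s : ℝ)⁻¹ • ∑ j ∈ s, a j‖ ^ 2 =
      ∑ i ∈ s, ‖a i‖ ^ 2 - #s * ‖(#s : ℝ)⁻¹ • ∑ j ∈ s, a j‖ ^ 2 := by
  rcases s.eq_empty_or_nonempty with rfl | hs
  · simp
  set m := (#s : ℝ)⁻¹ • ∑ j ∈ s, a j
  have hsum : ∑ j ∈ s, a j = (#s : ℝ) • m := by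
    rw [smul_inv_smul₀ (by exact_mod_cast hs.card_pos.ne')]
  simp only [norm_sub_sq_real, sum_add_distrib, sum_sub_distrib, ← mul_sum, ← sum_inner, hsum,
    real_inner_smul_left, real_inner_self_eq_norm_sq, sum_const, nsmul_eq_mul]
  ring

theorem sum_norm_sub_average_sq_le (s : Finset ι) (a : ι → E) :
    ∑ i ∈ s, ‖a i - (#s : ℝ)⁻¹ • ∑ j ∈ s, a j‖ ^ 2 ≤ ∑ i ∈ s, ‖a i‖ ^ 2 := by
  rw [sum_norm_sub_average_sq]
  have : 0 ≤ (#s : ℝ) * ‖(#s : ℝ)⁻¹ • ∑ j ∈ s, a j‖ ^ 2 := by positivity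
  linarith

theorem inv_card_mul_sum_norm_sub_average_add_sq_le (s : Finset ι) (a : ι → E) (g : E) {r : ℝ}
    (ha : ∀ i ∈ s, ‖a i‖ ≤ r) :
    (#s : ℝ)⁻¹ * ∑ i ∈ s, ‖a i - (#s : ℝ)⁻¹ • ∑ j ∈ s, a j + g‖ ^ 2 ≤
      2 * ‖g‖ ^ 2 + 2 * r ^ 2 := by
  rcases s.eq_empty_or_nonempty with rfl | hs
  · simp only [sum_empty, mul_zero]; positivity
  rw [inv_mul_le_iff₀ (by exact_mod_cast hs.card_pos)]
  have hsq : ∑ i ∈ s, ‖a i‖ ^ 2 ≤ #s * r ^ 2 := by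
    simpa using sum_le_sum fun i hi => pow_le_pow_left₀ (norm_nonneg _) (ha i hi) 2
  calc ∑ i ∈ s, ‖a i - (#s : ℝ)⁻¹ • ∑ j ∈ s, a j + g‖ ^ 2
      ≤ ∑ i ∈ s, 2 * (‖a i - (#s : ℝ)⁻¹ • ∑ j ∈ s, a j‖ ^ 2 + ‖g‖ ^ 2) :=
        sum_le_sum fun i _ => norm_add_sq_le _ _
    _ = 2 * ∑ i ∈ s, ‖a i - (#s : ℝ)⁻¹ • ∑ j ∈ s, a j‖ ^ 2 + 2 * #s * ‖g‖ ^ 2 := by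
        rw [← mul_sum, sum_add_distrib, sum_const, nsmul_eq_mul]; ring
    _ ≤ #s * (2 * ‖g‖ ^ 2 + 2 * r ^ 2) := by
        linarith [sum_norm_sub_average_sq_le s a]

end Variance

theorem stmt_9_general (d n : ℕ) (L : ℝ)
    (f : Fin n → EuclideanSpace ℝ (Fin d) → ℝ)
    (hdiff : ∀ i, Differentiable ℝ (f i))
    (hlip : ∀ i (w w' : EuclideanSpace ℝ (Fin d)),
      ‖gradient (f i) w - gradient (f i) w'‖ ≤ L * ‖w - w'‖)
    (F : EuclideanSpace ℝ (Fin d) → ℝ) (hF : F = fun w => (1 / n : ℝ) * ∑ i, f i w) :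
    ∀ w wt : EuclideanSpace ℝ (Fin d),
      (1 / n : ℝ) * ∑ i, ‖gradient (f i) w - gradient (f i) wt + gradient F wt‖ ^ 2 ≤
        2 * ‖gradient F w‖ ^ 2 + 2 * L ^ 2 * ‖w - wt‖ ^ 2 := by
  intro w wt
  set a := fun i => gradient (f i) w - gradient (f i) wt
  have hgrad (x) : gradient F x = (n : ℝ)⁻¹ • ∑ i, gradient (f i) x := by
    rw [hF, gradient_fun_const_mul_sum _ _ fun i _ => (hdiff i).differentiableAt, one_div]
  have hsummand (i) : a i + gradient F wt = a i - (n : ℝ)⁻¹ • ∑ j, a j + gradient F w := by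
    simp only [a, sum_sub_distrib, smul_sub, ← hgrad]
    abel
  have hbound := inv_card_mul_sum_norm_sub_average_add_sq_le univ a (gradient F w)
    fun i _ => hlip i w wt
  rw [card_fin] at hbound
  calc (1 / n : ℝ) * ∑ i, ‖a i + gradient F wt‖ ^ 2
      = (n : ℝ)⁻¹ * ∑ i, ‖a i - (n : ℝ)⁻¹ • ∑ j, a j + gradient F w‖ ^ 2 := by
        simp only [one_div, hsummand]
    _ ≤ 2 * ‖gradient F w‖ ^ 2 + 2 * (L * ‖w - wt‖) ^ 2 := hbound
    _ = 2 * ‖gradient F w‖ ^ 2 + 2 * L ^ 2 * ‖w - wt‖ ^ 2 := by ring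

theorem stmt_9 (d n : ℕ) (hn : 1 ≤ n) (L : ℝ) (hL : 0 ≤ L)
    (f : Fin n → EuclideanSpace ℝ (Fin d) → ℝ)
    (hdiff : ∀ i, Differentiable ℝ (f i))
    (hlip : ∀ i (w w' : EuclideanSpace ℝ (Fin d)),
      ‖gradient (f i) w - gradient (f i) w'‖ ≤ L * ‖w - w'‖)
    (F : EuclideanSpace ℝ (Fin d) → ℝ) (hF : F = fun w => (1 / n : ℝ) * ∑ i, f i w) :
    ∀ w wt : EuclideanSpace ℝ (Fin d),
      (1 / n : ℝ) * ∑ i, ‖gradient (f i) w - gradient (f i) wt + gradient F wt‖ ^ 2 ≤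
        2 * ‖gradient F w‖ ^ 2 + 2 * L ^ 2 * ‖w - wt‖ ^ 2 :=
  stmt_9_general d n L f hdiff hlip F hF
end

section
/- Let n ≥ 1 and let f_i : ℝ^d → ℝ (i = 1, …, n) be differentiable functions each with L-Lipschitz gradient, set f := (1/n)·∑_{i=1}^n f_i, and let w* ∈ ℝ^d satisfy ∇f(w*) = 0. Then for all w, w̃ ∈ ℝ^d, (1/n)·∑_{i=1}^n ‖∇f_i(w) − ∇f_i(w̃) + ∇f(w̃)‖² ≤ 2L²‖w − w*‖² + 2L²‖w̃ − w*‖². -/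
/-!
Centre every gradient at the stationary point: with `a i = ∇fᵢ(w) - ∇fᵢ(w*)` and
`x i = ∇fᵢ(w̃) - ∇fᵢ(w*)`, the condition `∇f(w*) = 0` makes `∇f(w̃)` the mean `x̄` of the `x i`,
so the SVRG gradient is `a i - (x i - x̄)`. Then `‖u - v‖² ≤ 2‖u‖² + 2‖v‖²`, the fact that the
variance of the `x i` is at most their second moment, and the Lipschitz bounds
`‖a i‖ ≤ L‖w - w*‖`, `‖x i‖ ≤ L‖w̃ - w*‖` give the estimate.
-/

open Finset

section Gradient

variable {F : Type*} [NormedAddCommGroup F] [InnerProductSpace ℝ F] [CompleteSpace F]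
  {x : F}

theorem HasGradientAt.fun_sum {ι : Type*} {s : Finset ι} {f : ι → F → ℝ} {f' : ι → F}
    (h : ∀ i ∈ s, HasGradientAt (f i) (f' i) x) :
    HasGradientAt (fun w => ∑ i ∈ s, f i w) (∑ i ∈ s, f' i) x := by
  rw [hasGradientAt_iff_hasFDerivAt, map_sum]
  exact HasFDerivAt.fun_sum fun i hi => (h i hi).hasFDerivAt

theorem HasGradientAt.const_mul {f : F → ℝ} {f' : F} (c : ℝ) (h : HasGradientAt f f' x) :
    HasGradientAt (fun w => c * f w) (c • f') x := by
  rw [hasGradientAt_iff_hasFDerivAt, map_smul]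
  exact h.hasFDerivAt.const_mul c

end Gradient

section Mean

variable {E : Type*} [NormedAddCommGroup E] [InnerProductSpace ℝ E] {ι : Type*} [Fintype ι]

theorem norm_sub_sq_le_two_mul {G : Type*} [SeminormedAddCommGroup G] (u v : G) :
    ‖u - v‖ ^ 2 ≤ 2 * (‖u‖ ^ 2 + ‖v‖ ^ 2) :=
  (pow_le_pow_left₀ (norm_nonneg _) (norm_sub_le u v) 2).trans add_sq_le

theorem card_smul_inv_card_smul_sum (x : ι → E) :
    (Fintype.card ι : ℝ) • ((Fintype.card ι : ℝ)⁻¹ • ∑ i, x i) = ∑ i, x i := by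
  rcases isEmpty_or_nonempty ι with hι | hι
  · simp
  · rw [smul_smul, mul_inv_cancel₀ (by positivity), one_smul]

theorem sum_norm_sub_mean_sq_le_sum_norm_sq (x : ι → E) :
    ∑ i, ‖x i - (Fintype.card ι : ℝ)⁻¹ • ∑ j, x j‖ ^ 2 ≤ ∑ i, ‖x i‖ ^ 2 := by
  set n : ℝ := (Fintype.card ι : ℝ)
  set m := n⁻¹ • ∑ j, x j
  have hsum : ∑ j, x j = n • m := (card_smul_inv_card_smul_sum x).symm
  calc ∑ i, ‖x i - m‖ ^ 2 = ∑ i, ‖x i‖ ^ 2 - 2 * inner ℝ (∑ i, x i) m + n * ‖m‖ ^ 2 := by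
        simp only [norm_sub_sq_real, sum_add_distrib, sum_sub_distrib, sum_inner, ← mul_sum,
          sum_const, card_univ, nsmul_eq_mul, n]
    _ = ∑ i, ‖x i‖ ^ 2 - n * ‖m‖ ^ 2 := by
        rw [hsum, real_inner_smul_left, real_inner_self_eq_norm_sq]
        ring
    _ ≤ ∑ i, ‖x i‖ ^ 2 := sub_le_self _ (by positivity)

theorem sum_norm_sub_add_mean_sq_le (g h c : ι → E) (hc : ∑ i, c i = 0) :
    ∑ i, ‖g i - h i + (Fintype.card ι : ℝ)⁻¹ • ∑ j, h j‖ ^ 2 ≤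
      2 * ∑ i, ‖g i - c i‖ ^ 2 + 2 * ∑ i, ‖h i - c i‖ ^ 2 := by
  set x := fun i => h i - c i
  set m := (Fintype.card ι : ℝ)⁻¹ • ∑ j, x j
  have hmean : (Fintype.card ι : ℝ)⁻¹ • ∑ j, h j = m := by
    simp only [m, x, sum_sub_distrib, hc, sub_zero]
  calc ∑ i, ‖g i - h i + (Fintype.card ι : ℝ)⁻¹ • ∑ j, h j‖ ^ 2
      = ∑ i, ‖(g i - c i) - (x i - m)‖ ^ 2 := by
        rw [hmean]
        congr! 3
        simp only [x]
        abel
    _ ≤ ∑ i, 2 * (‖g i - c i‖ ^ 2 + ‖x i - m‖ ^ 2) :=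
        sum_le_sum fun i _ => norm_sub_sq_le_two_mul _ _
    _ = 2 * ∑ i, ‖g i - c i‖ ^ 2 + 2 * ∑ i, ‖x i - m‖ ^ 2 := by
        rw [← mul_add, ← mul_sum, sum_add_distrib]
    _ ≤ 2 * ∑ i, ‖g i - c i‖ ^ 2 + 2 * ∑ i, ‖x i‖ ^ 2 := by
        gcongr 2 * ∑ i, ‖g i - c i‖ ^ 2 + 2 * ?_
        exact sum_norm_sub_mean_sq_le_sum_norm_sq x

end Mean

theorem stmt_10_general (d n : ℕ) (hn : 1 ≤ n) (L : ℝ)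
    (f : Fin n → EuclideanSpace ℝ (Fin d) → ℝ)
    (hdiff : ∀ i, Differentiable ℝ (f i))
    (hlip : ∀ i (w w' : EuclideanSpace ℝ (Fin d)),
      ‖gradient (f i) w - gradient (f i) w'‖ ≤ L * ‖w - w'‖)
    (F : EuclideanSpace ℝ (Fin d) → ℝ) (hF : F = fun w => (1 / n : ℝ) * ∑ i, f i w)
    (wstar : EuclideanSpace ℝ (Fin d)) (hstat : gradient F wstar = 0) :
    ∀ w wt : EuclideanSpace ℝ (Fin d),
      (1 / n : ℝ) * ∑ i, ‖gradient (f i) w - gradient (f i) wt + gradient F wt‖ ^ 2 ≤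
        2 * L ^ 2 * ‖w - wstar‖ ^ 2 + 2 * L ^ 2 * ‖wt - wstar‖ ^ 2 := by
  intro w wt
  have hn' : (n : ℝ) ≠ 0 := by positivity
  have hgradF (x) : gradient F x = (n : ℝ)⁻¹ • ∑ i, gradient (f i) x := by
    rw [hF, ← one_div]
    exact ((HasGradientAt.fun_sum fun i _ => (hdiff i x).hasGradientAt).const_mul _).gradient
  have hsum_star : ∑ i, gradient (f i) wstar = 0 := by
    rw [hgradF, smul_eq_zero] at hstat
    exact hstat.resolve_left (inv_ne_zero hn')
  have hlip_sq (i) (u : EuclideanSpace ℝ (Fin d)) :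
      ‖gradient (f i) u - gradient (f i) wstar‖ ^ 2 ≤ L ^ 2 * ‖u - wstar‖ ^ 2 := by
    rw [← mul_pow]
    exact pow_le_pow_left₀ (norm_nonneg _) (hlip i u wstar) 2
  calc (1 / n : ℝ) * ∑ i, ‖gradient (f i) w - gradient (f i) wt + gradient F wt‖ ^ 2
      ≤ (1 / n : ℝ) * (2 * ∑ i, ‖gradient (f i) w - gradient (f i) wstar‖ ^ 2
          + 2 * ∑ i, ‖gradient (f i) wt - gradient (f i) wstar‖ ^ 2) := by
        gcongr
        simpa only [hgradF, Fintype.card_fin] using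
          sum_norm_sub_add_mean_sq_le _ _ _ hsum_star
    _ ≤ (1 / n : ℝ) * (2 * ∑ _i : Fin n, L ^ 2 * ‖w - wstar‖ ^ 2
          + 2 * ∑ _i : Fin n, L ^ 2 * ‖wt - wstar‖ ^ 2) := by
        gcongr with i _ i _ <;> exact hlip_sq i _
    _ = 2 * L ^ 2 * ‖w - wstar‖ ^ 2 + 2 * L ^ 2 * ‖wt - wstar‖ ^ 2 := by
        simp only [sum_const, card_univ, Fintype.card_fin, nsmul_eq_mul]
        field_simp

theorem stmt_10 (d n : ℕ) (hn : 1 ≤ n) (L : ℝ) (hL : 0 ≤ L)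
    (f : Fin n → EuclideanSpace ℝ (Fin d) → ℝ)
    (hdiff : ∀ i, Differentiable ℝ (f i))
    (hlip : ∀ i (w w' : EuclideanSpace ℝ (Fin d)),
      ‖gradient (f i) w - gradient (f i) w'‖ ≤ L * ‖w - w'‖)
    (F : EuclideanSpace ℝ (Fin d) → ℝ) (hF : F = fun w => (1 / n : ℝ) * ∑ i, f i w)
    (wstar : EuclideanSpace ℝ (Fin d)) (hstat : gradient F wstar = 0) :
    ∀ w wt : EuclideanSpace ℝ (Fin d),
      (1 / n : ℝ) * ∑ i, ‖gradient (f i) w - gradient (f i) wt + gradient F wt‖ ^ 2 ≤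
        2 * L ^ 2 * ‖w - wstar‖ ^ 2 + 2 * L ^ 2 * ‖wt - wstar‖ ^ 2 :=
  stmt_10_general d n hn L f hdiff hlip F hF wstar hstat
end

section
/- Let n ≥ 1 and let f_i : ℝ^d → ℝ (i = 1, …, n) be differentiable functions each with L-Lipschitz gradient, set f := (1/n)·∑_{i=1}^n f_i, assume f is μ-strongly convex for some μ > 0, and let w* be a global minimizer of f. Then for all w, w̃ ∈ ℝ^d, (1/n)·∑_{i=1}^n ‖∇f_i(w) − ∇f_i(w̃) + ∇f(w̃)‖² ≤ (4L²/μ)·(f(w) − f(w*)) + (4L²/μ)·(f(w̃) − f(w*)). -/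
/-!
With `aᵢ = ∇fᵢ(w) - ∇fᵢ(w*)` and `bᵢ = ∇fᵢ(w̃) - ∇fᵢ(w*)`, the mean of the `bᵢ` is
`∇f(w̃)` because `∇f(w*) = 0`, so the summand is `aᵢ - (bᵢ - mean b)`. Hence it is at most
`2‖aᵢ‖² + 2‖bᵢ - mean b‖²`, and a variance is at most the corresponding second moment. The
Lipschitz bounds give `‖aᵢ‖ ≤ L‖w - w*‖`, `‖bᵢ‖ ≤ L‖w̃ - w*‖`, and strong convexity at the
minimizer gives `μ‖x - w*‖²/2 ≤ f(x) - f(w*)`.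
-/

open scoped RealInnerProductSpace
open Finset

theorem norm_add_sq_le_two_mul_add {E : Type*} [SeminormedAddCommGroup E] (x y : E) :
    ‖x + y‖ ^ 2 ≤ 2 * ‖x‖ ^ 2 + 2 * ‖y‖ ^ 2 := by
  nlinarith [norm_add_le x y, norm_nonneg (x + y), sq_nonneg (‖x‖ - ‖y‖)]

section InnerProductSpace

variable {E : Type*} [NormedAddCommGroup E] [InnerProductSpace ℝ E]

theorem sum_norm_sub_sq_le_of_sum_eq {ι : Type*} (s : Finset ι) (b : ι → E) {m : E}
    (hm : ∑ i ∈ s, b i = (#s : ℝ) • m) :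
    ∑ i ∈ s, ‖b i - m‖ ^ 2 ≤ ∑ i ∈ s, ‖b i‖ ^ 2 := by
  have hcross : ∑ i ∈ s, ⟪b i, m⟫ = #s * ‖m‖ ^ 2 := by
    rw [← sum_inner, hm, real_inner_smul_left, real_inner_self_eq_norm_sq]
  calc ∑ i ∈ s, ‖b i - m‖ ^ 2
      = ∑ i ∈ s, ‖b i‖ ^ 2 - 2 * ∑ i ∈ s, ⟪b i, m⟫ + #s * ‖m‖ ^ 2 := by
        simp only [norm_sub_sq_real, sum_add_distrib, sum_sub_distrib, mul_sum, sum_const,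
          nsmul_eq_mul]
    _ ≤ ∑ i ∈ s, ‖b i‖ ^ 2 := by rw [hcross]; nlinarith [sq_nonneg ‖m‖]

theorem mean_norm_sub_add_sq_le {ι : Type*} (s : Finset ι) (hs : s.Nonempty) (a b : ι → E)
    {m : E} (hm : ∑ i ∈ s, b i = (#s : ℝ) • m) {A B : ℝ}
    (ha : ∀ i ∈ s, ‖a i‖ ≤ A) (hb : ∀ i ∈ s, ‖b i‖ ≤ B) :
    (1 / #s : ℝ) * ∑ i ∈ s, ‖a i - b i + m‖ ^ 2 ≤ 2 * A ^ 2 + 2 * B ^ 2 := by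
  have hsq {c : ι → E} {C : ℝ} (hc : ∀ i ∈ s, ‖c i‖ ≤ C) : ∑ i ∈ s, ‖c i‖ ^ 2 ≤ #s * C ^ 2 := by
    simpa using sum_le_card_nsmul s _ _ fun i hi => pow_le_pow_left₀ (norm_nonneg _) (hc i hi) 2
  have hsum : ∑ i ∈ s, ‖a i - b i + m‖ ^ 2 ≤ #s * (2 * A ^ 2 + 2 * B ^ 2) := calc
    ∑ i ∈ s, ‖a i - b i + m‖ ^ 2 ≤ ∑ i ∈ s, (2 * ‖a i‖ ^ 2 + 2 * ‖b i - m‖ ^ 2) :=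
      sum_le_sum fun i _ => by
        rw [sub_add, sub_eq_add_neg, ← norm_neg (b i - m)]
        exact norm_add_sq_le_two_mul_add _ _
    _ = 2 * ∑ i ∈ s, ‖a i‖ ^ 2 + 2 * ∑ i ∈ s, ‖b i - m‖ ^ 2 := by
      rw [sum_add_distrib, mul_sum, mul_sum]
    _ ≤ 2 * (#s * A ^ 2) + 2 * (#s * B ^ 2) := by
      gcongr
      exacts [hsq ha, (sum_norm_sub_sq_le_of_sum_eq s b hm).trans (hsq hb)]
    _ = #s * (2 * A ^ 2 + 2 * B ^ 2) := by ring
  have hcard : (0 : ℝ) < #s := by exact_mod_cast hs.card_pos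
  rw [one_div, inv_mul_le_iff₀ hcard]
  exact hsum

end InnerProductSpace

section Gradient

variable {E : Type*} [NormedAddCommGroup E] [InnerProductSpace ℝ E] [CompleteSpace E]

theorem gradient_const_mul_sum {ι : Type*} (s : Finset ι) (c : ℝ) {f : ι → E → ℝ} {x : E}
    (hf : ∀ i ∈ s, DifferentiableAt ℝ (f i) x) :
    gradient (fun w => c * ∑ i ∈ s, f i w) x = c • ∑ i ∈ s, gradient (f i) x := by
  simp only [gradient, fderiv_const_mul (DifferentiableAt.fun_sum hf), fderiv_fun_sum hf,
    map_smul, map_sum]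

theorem IsLocalMin.gradient_eq_zero {F : E → ℝ} {x : E} (h : IsLocalMin F x) :
    gradient F x = 0 := by
  simp [gradient, h.fderiv_eq_zero]

theorem mul_sq_norm_sub_le_sub_of_isMinimizer {F : E → ℝ} {μ : ℝ} {w w' : E}
    (hsc : F w ≥ F w' + ⟪gradient F w', w - w'⟫ + μ / 2 * ‖w - w'‖ ^ 2)
    (hmin : ∀ w, F w' ≤ F w) :
    μ / 2 * ‖w - w'‖ ^ 2 ≤ F w - F w' := by
  rw [IsLocalMin.gradient_eq_zero (Filter.Eventually.of_forall hmin), inner_zero_left] at hsc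
  linarith

end Gradient

theorem stmt_11_general (d n : ℕ) (hn : 1 ≤ n) (L : ℝ)
    (f : Fin n → EuclideanSpace ℝ (Fin d) → ℝ)
    (hdiff : ∀ i, Differentiable ℝ (f i))
    (hlip : ∀ i (w w' : EuclideanSpace ℝ (Fin d)),
      ‖gradient (f i) w - gradient (f i) w'‖ ≤ L * ‖w - w'‖)
    (F : EuclideanSpace ℝ (Fin d) → ℝ) (hF : F = fun w => (1 / n : ℝ) * ∑ i, f i w)
    (μ : ℝ) (hμ : 0 < μ)
    (hsc : ∀ w w' : EuclideanSpace ℝ (Fin d),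
      F w ≥ F w' + ⟪gradient F w', w - w'⟫ + μ / 2 * ‖w - w'‖ ^ 2)
    (wstar : EuclideanSpace ℝ (Fin d)) (hmin : ∀ w, F wstar ≤ F w) :
    ∀ w wt : EuclideanSpace ℝ (Fin d),
      (1 / n : ℝ) * ∑ i, ‖gradient (f i) w - gradient (f i) wt + gradient F wt‖ ^ 2 ≤
        4 * L ^ 2 / μ * (F w - F wstar) + 4 * L ^ 2 / μ * (F wt - F wstar) := by
  intro w wt
  have hgradF (x) : gradient F x = (1 / n : ℝ) • ∑ i, gradient (f i) x := by
    rw [hF]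
    exact gradient_const_mul_sum _ _ fun i _ => hdiff i x
  have hgrad_min : gradient F wstar = 0 := IsLocalMin.gradient_eq_zero (.of_forall hmin)
  have hmean : ∑ i, (gradient (f i) wt - gradient (f i) wstar) =
      (#(univ : Finset (Fin n)) : ℝ) • gradient F wt := by
    have hn0 : (n : ℝ) ≠ 0 := Nat.cast_ne_zero.2 (by omega)
    rw [← sub_zero (gradient F wt), ← hgrad_min, hgradF, hgradF, ← smul_sub, smul_smul,
      card_univ, Fintype.card_fin, mul_one_div_cancel hn0, one_smul, sum_sub_distrib]
  have hvar := mean_norm_sub_add_sq_le univ (univ_nonempty_iff.2 ⟨⟨0, hn⟩⟩) _ _ hmean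
    (fun i _ => hlip i w wstar) (fun i _ => hlip i wt wstar)
  simp only [sub_sub_sub_cancel_right, card_univ, Fintype.card_fin] at hvar
  have hgrowth (x) : 2 * (L * ‖x - wstar‖) ^ 2 ≤ 4 * L ^ 2 / μ * (F x - F wstar) := calc
    2 * (L * ‖x - wstar‖) ^ 2 = 4 * L ^ 2 / μ * (μ / 2 * ‖x - wstar‖ ^ 2) := by
      field_simp
      ring
    _ ≤ 4 * L ^ 2 / μ * (F x - F wstar) := by
      gcongr
      exact mul_sq_norm_sub_le_sub_of_isMinimizer (hsc x wstar) hmin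
  linarith [hgrowth w, hgrowth wt]

theorem stmt_11 (d n : ℕ) (hn : 1 ≤ n) (L : ℝ) (hL : 0 ≤ L)
    (f : Fin n → EuclideanSpace ℝ (Fin d) → ℝ)
    (hdiff : ∀ i, Differentiable ℝ (f i))
    (hlip : ∀ i (w w' : EuclideanSpace ℝ (Fin d)),
      ‖gradient (f i) w - gradient (f i) w'‖ ≤ L * ‖w - w'‖)
    (F : EuclideanSpace ℝ (Fin d) → ℝ) (hF : F = fun w => (1 / n : ℝ) * ∑ i, f i w)
    (μ : ℝ) (hμ : 0 < μ)
    (hsc : ∀ w w' : EuclideanSpace ℝ (Fin d),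
      F w ≥ F w' + ⟪gradient F w', w - w'⟫ + μ / 2 * ‖w - w'‖ ^ 2)
    (wstar : EuclideanSpace ℝ (Fin d)) (hmin : ∀ w, F wstar ≤ F w) :
    ∀ w wt : EuclideanSpace ℝ (Fin d),
      (1 / n : ℝ) * ∑ i, ‖gradient (f i) w - gradient (f i) wt + gradient F wt‖ ^ 2 ≤
        4 * L ^ 2 / μ * (F w - F wstar) + 4 * L ^ 2 / μ * (F wt - F wstar) :=
  stmt_11_general d n hn L f hdiff hlip F hF μ hμ hsc wstar hmin
end
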